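/- arXiv:math/0609420 — 3 statements merged into one kernel-verified Lean document; each statement's English description precedes it below -/
import Mathlib

section
/- Let X be a simplicial set such that every map Λ[3,1] → X extends to a map Δ[3] → X, and such that any two 2-simplices of X having the same d₀-face and the same d₂-face are equal. Let α, β, γ, δ ∈ X₂ satisfy d₀α = d₂β, d₂γ = d₁α, d₀γ = d₀β, d₂δ = d₂α, and d₀δ = d₁β. Then d₁γ = d₁δ. (This is the associativity of the composition of arrows in a groupoid extracted from the horn-filling conditions: if α witnesses a composite p of f and g, β witnesses a composite q of g and h, γ witnesses a composite of p and h, and δ witnesses a composite of f and q, then the two composites agree.) -/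
/-!
Glue `β`, `δ`, `α` into a `Λ[3,1]`-horn (as its faces `d₀`, `d₂`, `d₃`) and fill it by a
3-simplex `s`. By the simplicial identities `d₁ s` has the same `d₀`- and `d₂`-faces as `γ`,
so `γ = d₁ s` by uniqueness, and then `d₁ γ = d₁ d₁ s = d₁ d₂ s = d₁ δ`.
-/

open CategoryTheory Simplicial

namespace SSet

variable {X : SSet.{u}}

lemma exists_δ_eq_of_horn₃₁_fill
    (hfill : ∀ σ₀ : (Λ[3, 1] : SSet) ⟶ X, ∃ σ : Δ[3] ⟶ X, σ₀ = Λ[3, 1].ι ≫ σ)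
    {x₀ x₂ x₃ : X _⦋2⦌} (h₀₃ : X.δ 2 x₀ = X.δ 0 x₃) (h₀₂ : X.δ 1 x₀ = X.δ 0 x₂)
    (h₂₃ : X.δ 2 x₂ = X.δ 2 x₃) :
    ∃ s : X _⦋3⦌, X.δ 0 s = x₀ ∧ X.δ 2 s = x₂ ∧ X.δ 3 s = x₃ := by
  obtain ⟨σ, hσ⟩ := hfill (horn₃₁.desc (yonedaEquiv.symm x₀) (yonedaEquiv.symm x₂)
    (yonedaEquiv.symm x₃) (by simp only [stdSimplex.δ_comp_yonedaEquiv_symm, h₀₃])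
    (by simp only [stdSimplex.δ_comp_yonedaEquiv_symm, h₀₂])
    (by simp only [stdSimplex.δ_comp_yonedaEquiv_symm, h₂₃]))
  have hface (j : Fin 4) (hj : j ≠ 1) :
      X.δ j (yonedaEquiv σ) = yonedaEquiv (horn.ι 1 j hj ≫ Λ[3, 1].ι ≫ σ) := by
    rw [← stdSimplex.yonedaEquiv_δ_comp, horn.ι_ι_assoc]
  refine ⟨yonedaEquiv σ, ?_, ?_, ?_⟩ <;> rw [hface _ (by decide), ← hσ] <;> simp

end SSet

/-- Associativity of composition extracted from horn filling: in a simplicial set in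
which every `Λ[3,1]`-horn has a filler and `Λ[2,1]`-horn fillers are unique (any two
2-simplices with the same `d₀`- and `d₂`-faces coincide), witnesses for the two ways
of composing three arrows have the same `d₁`-face. -/
theorem assoc_of_horn_filling (X : SSet.{u})
    (hfill : ∀ σ₀ : (Λ[3, 1] : SSet) ⟶ X, ∃ σ : Δ[3] ⟶ X, σ₀ = Λ[3, 1].ι ≫ σ)
    (huniq : ∀ η η' : X _⦋2⦌, X.δ 0 η = X.δ 0 η' → X.δ 2 η = X.δ 2 η' → η = η')
    (α β γ δ : X _⦋2⦌)
    (h₁ : X.δ 0 α = X.δ 2 β)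
    (h₂ : X.δ 2 γ = X.δ 1 α)
    (h₃ : X.δ 0 γ = X.δ 0 β)
    (h₄ : X.δ 2 δ = X.δ 2 α)
    (h₅ : X.δ 0 δ = X.δ 1 β) :
    X.δ 1 γ = X.δ 1 δ := by
  obtain ⟨s, hs₀, hs₂, hs₃⟩ := SSet.exists_δ_eq_of_horn₃₁_fill hfill h₁.symm h₅.symm h₄
  have d₀d₁ : X.δ 0 (X.δ 1 s) = X.δ 0 (X.δ 0 s) :=
    (SSet.δ_comp_δ_self_apply (i := 0) s).symm
  have d₂d₁ : X.δ 2 (X.δ 1 s) = X.δ 1 (X.δ 3 s) :=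
    (SSet.δ_comp_δ_apply (i := 1) (j := 2) (by decide) s).symm
  have d₁d₁ : X.δ 1 (X.δ 1 s) = X.δ 1 (X.δ 2 s) := SSet.δ_comp_δ_self_apply (i := 1) s
  have hγ : γ = X.δ 1 s := huniq _ _ (by rw [d₀d₁, hs₀, h₃]) (by rw [d₂d₁, hs₃, h₂])
  rw [hγ, d₁d₁, hs₂]
end

section
/- Every 2-groupoid is 3-coskeletal: if X is a simplicial set satisfying Kan(m,j) for all m ≥ 1 and 0 ≤ j ≤ m, and Kan!(m,j) for all m ≥ 3 and 0 ≤ j ≤ m, then the unit map X → cosk₃(tr₃ X) of the 3-coskeleton adjunction is an isomorphism of simplicial sets; i.e., X is determined by its simplices of dimension at most 3. -/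
open CategoryTheory Simplicial

/-- `Kan(m,j)`: every map from the horn `Λ[m,j]` to `X` extends along the horn
inclusion to a map `Δ[m] ⟶ X`. -/
def SSet.KanCond (X : SSet.{u}) (m : ℕ) (j : Fin (m + 1)) : Prop :=
  ∀ σ₀ : (Λ[m, j] : SSet.{u}) ⟶ X, ∃ σ : Δ[m] ⟶ X, σ₀ = Λ[m, j].ι ≫ σ

/-- `Kan!(m,j)`: every map from the horn `Λ[m,j]` to `X` extends *uniquely* along the
horn inclusion to a map `Δ[m] ⟶ X`. -/
def SSet.KanCondUnique (X : SSet.{u}) (m : ℕ) (j : Fin (m + 1)) : Prop :=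
  ∀ σ₀ : (Λ[m, j] : SSet.{u}) ⟶ X, ∃! σ : Δ[m] ⟶ X, σ₀ = Λ[m, j].ι ≫ σ

/-!
For `m > n`, unique filling of `Λ[m, 0]` determines an `m`-simplex by its faces, so by induction
every simplex is determined by its `n`-truncation. Conversely, to lift `tr Δ[m] ⟶ tr X` with
`m > n`, lift its faces by induction; the lifts are compatible because lifts are unique, the faces
other than the `0`-th fill the horn `Λ[m, 0]`, and the `0`-th face of the filler is the prescribed
one since both fill the same horn `Λ[m - 1, 0]`, with `m - 1 ≥ n`.
-/

open SimplexCategory Opposite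

universe u

namespace SSet

variable {X : SSet.{u}}

lemma KanCondUnique.hom_ext {m : ℕ} {i : Fin (m + 2)} (h : X.KanCondUnique (m + 1) i)
    {f g : Δ[m + 1] ⟶ X} (hfg : ∀ j, j ≠ i → stdSimplex.δ j ≫ f = stdSimplex.δ j ≫ g) :
    f = g :=
  (h (Λ[m + 1, i].ι ≫ f)).unique rfl
    (horn.hom_ext' fun j hj => by simpa only [horn.ι_ι_assoc] using hfg j hj)

lemma exists_hom_of_faces {k : ℕ} (hfill : X.KanCond (k + 2) 0)
    (huniq : X.KanCondUnique (k + 1) 0) (f : Fin (k + 3) → (Δ[k + 1] ⟶ X))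
    (hf : ∀ (i j : Fin (k + 3)) (a b : Fin (k + 2)),
      δ a ≫ δ i = δ b ≫ δ j → stdSimplex.δ a ≫ f i = stdSimplex.δ b ≫ f j) :
    ∃ σ : Δ[k + 2] ⟶ X, ∀ i, stdSimplex.δ i ≫ σ = f i := by
  have hcompat : horn.IsCompatible (i := 0) fun j _ => f j := by
    rw [horn.isCompatible_iff]
    intro j l _ _ hjl
    apply hf
    simpa only [Fin.castSucc_castPred] using
      (δ_comp_δ' (i := j.castPred (Fin.ne_last_of_lt hjl)) (j := l) (by simpa using hjl)).symm
  obtain ⟨σ, hσ⟩ := hfill hcompat.desc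
  have hface : ∀ j, j ≠ 0 → stdSimplex.δ j ≫ σ = f j := fun j hj => by
    rw [← horn.ι_ι 0 j hj, Category.assoc, ← hσ, horn.IsCompatible.ι_desc]
  have hface₀ : stdSimplex.δ 0 ≫ σ = f 0 := huniq.hom_ext fun j _ => by
    have hδ : δ 0 ≫ δ j.succ = δ j ≫ δ 0 := δ_comp_δ (Fin.zero_le j)
    have hδ' := CosimplicialObject.δ_comp_δ stdSimplex.{u} (Fin.zero_le j)
    rw [Fin.castSucc_zero] at hδ'
    rw [← Category.assoc, ← hδ', Category.assoc, hface j.succ (Fin.succ_ne_zero j)]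
    exact hf _ _ _ _ hδ
  refine ⟨σ, fun i => ?_⟩
  rcases eq_or_ne i 0 with rfl | hi
  · exact hface₀
  · exact hface i hi

variable {n : ℕ}

lemma truncation_hom_ext_of_faces {Y : Truncated.{u} n} {k : ℕ} (hk : n ≤ k)
    {φ ψ : (truncation n).obj Δ[k + 1] ⟶ Y}
    (h : ∀ i, (truncation n).map (stdSimplex.δ i) ≫ φ =
      (truncation n).map (stdSimplex.δ i) ≫ ψ) :
    φ = ψ := by
  ext ⟨⟨m, hm⟩⟩ α
  obtain ⟨i, θ, hθ⟩ := eq_comp_δ_of_not_surjective (stdSimplex.objEquiv α) fun hsurj =>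
    have : Epi (stdSimplex.objEquiv α) := epi_iff_surjective.mpr hsurj
    absurd ((len_le_of_epi (stdSimplex.objEquiv α)).trans hm) (by rw [len_mk]; omega)
  have hα : α = ((truncation n).map (stdSimplex.δ i)).app (op ⟨m, hm⟩)
      (stdSimplex.objEquiv.symm θ) := by
    rw [← stdSimplex.objEquiv.symm_apply_apply α, hθ]
    rfl
  rw [hα]
  exact types_congr_hom (NatTrans.congr_app (h i) (op ⟨m, hm⟩)) _

lemma truncation_map_injective_of_le {k : ℕ} (hk : k ≤ n) :
    Function.Injective fun f : Δ[k] ⟶ X => (truncation n).map f := fun _ _ hfg =>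
  yonedaEquiv.injective
    (types_congr_hom (NatTrans.congr_app hfg (op ⟨⦋k⦌, hk⟩)) (yonedaEquiv (𝟙 _)))

lemma truncation_map_surjective_of_le {k : ℕ} (hk : k ≤ n) :
    Function.Surjective fun f : Δ[k] ⟶ X => (truncation n).map f := fun g => by
  refine ⟨yonedaEquiv.symm (g.app (op ⟨⦋k⦌, hk⟩) (yonedaEquiv (𝟙 _))), ?_⟩
  ext ⟨⟨m, hm⟩⟩ α
  exact (types_congr_hom (g.naturality (ObjectProperty.homMk (X := ⟨m, hm⟩) (Y := ⟨⦋k⦌, hk⟩)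
    (stdSimplex.objEquiv α)).op) (yonedaEquiv (𝟙 _))).symm.trans
    (congrArg _ (stdSimplex.objEquiv.injective (Category.comp_id _)))

lemma truncation_map_injective (huniq : ∀ m, n < m → X.KanCondUnique m 0) (k : ℕ) :
    Function.Injective fun f : Δ[k] ⟶ X => (truncation n).map f := by
  induction k with
  | zero => exact truncation_map_injective_of_le (Nat.zero_le n)
  | succ k ih =>
    rcases le_or_gt (k + 1) n with hk | hk
    · exact truncation_map_injective_of_le hk
    intro f g hfg
    refine (huniq (k + 1) hk).hom_ext fun j _ => ih ?_
    dsimp only at hfg ⊢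
    rw [Functor.map_comp, Functor.map_comp, hfg]

lemma truncation_map_surjective (hn : 1 ≤ n) (hfill : ∀ m, n < m → X.KanCond m 0)
    (huniq : ∀ m, n ≤ m → X.KanCondUnique m 0) (k : ℕ) :
    Function.Surjective fun f : Δ[k] ⟶ X => (truncation n).map f := by
  induction k with
  | zero => exact truncation_map_surjective_of_le (Nat.zero_le n)
  | succ k ih =>
    rcases le_or_gt (k + 1) n with hk | hk
    · exact truncation_map_surjective_of_le hk
    obtain ⟨k, rfl⟩ : ∃ k', k = k' + 1 := ⟨k - 1, by omega⟩
    intro g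
    choose f hf using fun i => ih ((truncation n).map (stdSimplex.δ i) ≫ g)
    dsimp only at hf
    obtain ⟨σ, hσ⟩ := exists_hom_of_faces (hfill _ hk) (huniq _ (by omega)) f
      fun i j a b h => truncation_map_injective (fun m hm => huniq m hm.le) _ (by
        dsimp only
        rw [Functor.map_comp, Functor.map_comp, hf, hf, ← Category.assoc, ← Category.assoc,
          ← Functor.map_comp, ← Functor.map_comp]
        exact congrArg
          (fun θ : ⦋k⦌ ⟶ ⦋k + 2⦌ => (truncation n).map (SSet.stdSimplex.map θ) ≫ g) h)
    exact ⟨σ, truncation_hom_ext_of_faces (by omega) fun i => by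
      dsimp only
      rw [← Functor.map_comp, hσ, hf]⟩

lemma isIso_unit_app_of_bijective {C : Type*} [Category C] {L : SSet.{u} ⥤ C}
    {R : C ⥤ SSet.{u}} (adj : L ⊣ R) (X : SSet.{u})
    (h : ∀ k : ℕ, Function.Bijective fun f : Δ[k] ⟶ X => L.map f) : IsIso (adj.unit.app X) := by
  have (m : SimplexCategoryᵒᵖ) : IsIso ((adj.unit.app X).app m) := by
    obtain ⟨⟨k⟩⟩ := m
    have hcomp : ⇑((adj.unit.app X).app (op ⦋k⦌)) =
        yonedaEquiv ∘ adj.homEquiv _ _ ∘ (fun f => L.map f) ∘ yonedaEquiv.symm := by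
      funext x
      simp [Adjunction.homEquiv_unit]
    rw [isIso_iff_bijective, hcomp]
    exact yonedaEquiv.bijective.comp
      ((adj.homEquiv _ _).bijective.comp ((h k).comp yonedaEquiv.symm.bijective))
  exact NatIso.isIso_of_isIso_app _

end SSet

/-- Every 2-groupoid (horn fillers for all `m ≥ 1`, unique for `m ≥ 3`) is
3-coskeletal: the unit `X ⟶ cosk₃ (tr₃ X)` of the coskeleton adjunction is an
isomorphism of simplicial sets. -/
theorem two_groupoid_is_three_coskeletal (X : SSet.{u})
    (h₁ : ∀ (m : ℕ), 1 ≤ m → ∀ j : Fin (m + 1), X.KanCond m j)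
    (h₂ : ∀ (m : ℕ), 3 ≤ m → ∀ j : Fin (m + 1), X.KanCondUnique m j) :
    IsIso ((SSet.coskAdj 3).unit.app X) :=
  SSet.isIso_unit_app_of_bijective _ X fun k =>
    ⟨SSet.truncation_map_injective (n := 3) (fun m hm => h₂ m hm.le 0) k,
      SSet.truncation_map_surjective (by norm_num) (fun m hm => h₁ m (by omega) 0)
        (fun m hm => h₂ m hm 0) k⟩
end

section
/- Let X, Z, Z' be simplicial sets each satisfying Kan(m,j) for all m ≥ 1, 0 ≤ j ≤ m, and Kan!(m,j) for all m ≥ 3, 0 ≤ j ≤ m (i.e., 2-groupoids), and let f : Z → X and f' : Z' → X be equivalences of 2-groupoids. Let Z'' = Z ×_X Z' be the levelwise pullback, the simplicial set with Z''_n = Z_n ×_{X_n} Z'_n. Then Z'' is again a 2-groupoid, and the two projections Z'' → Z and Z'' → Z' are equivalences of 2-groupoids. -/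
open CategoryTheory Simplicial Opposite

/-- `X` is a (Lie, here: set-theoretic) 2-groupoid: horn fillers exist for all
`m ≥ 1` and are unique for `m ≥ 3`. -/
def SSet.Is2Groupoid (X : SSet.{u}) : Prop :=
  (∀ (m : ℕ), 1 ≤ m → ∀ j : Fin (m + 1), X.KanCond m j) ∧
  (∀ (m : ℕ), 3 ≤ m → ∀ j : Fin (m + 1), X.KanCondUnique m j)

/-- The restriction of an `n`-simplex `σ` of `Z` to the boundary `∂Δ[n]`. -/
def SSet.bdryRes {Z : SSet.{u}} (n : ℕ) (σ : Z _⦋n⦌) : (∂Δ[n] : SSet.{u}) ⟶ Z :=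
  ∂Δ[n].ι ≫ (SSet.yonedaEquiv (X := Z) (n := ⦋n⦌)).symm σ

/-- A simplicial map `f : Z ⟶ X` is an equivalence of 2-groupoids: the natural map
`Z_n → hom(∂Δ[n], Z) ×_{hom(∂Δ[n], X)} X_n` is surjective for `n = 0` (equivalently
`Z₀ → X₀` is surjective) and `n = 1`, and bijective for `n = 2`. -/
def SSet.IsEquiv2Gpd {Z X : SSet.{u}} (f : Z ⟶ X) : Prop :=
  Function.Surjective (f.app (op ⦋0⦌)) ∧
  (∀ (u : (∂Δ[1] : SSet.{u}) ⟶ Z) (σ : X _⦋1⦌), u ≫ f = SSet.bdryRes 1 σ →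
    ∃ τ : Z _⦋1⦌, SSet.bdryRes 1 τ = u ∧ f.app (op ⦋1⦌) τ = σ) ∧
  (∀ (u : (∂Δ[2] : SSet.{u}) ⟶ Z) (σ : X _⦋2⦌), u ≫ f = SSet.bdryRes 2 σ →
    ∃! τ : Z _⦋2⦌, SSet.bdryRes 2 τ = u ∧ f.app (op ⦋2⦌) τ = σ)

/-- The levelwise pullback `Z ×_X Z'` of two simplicial maps `f : Z ⟶ X` and
`f' : Z' ⟶ X`: its `n`-simplices are the pairs `(z, z')` with `f z = f' z'`. -/
def SSet.levelPullback {Z Z' X : SSet.{u}} (f : Z ⟶ X) (f' : Z' ⟶ X) : SSet.{u} where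
  obj m := { p : Z.obj m × Z'.obj m // f.app m p.1 = f'.app m p.2 }
  map {m₁ m₂} g := TypeCat.ofHom fun p => ⟨⟨Z.map g p.1.1, Z'.map g p.1.2⟩, by
    have h1 := types_congr_hom (f.naturality g) p.1.1
    have h2 := types_congr_hom (f'.naturality g) p.1.2
    simp only [types_comp_apply] at h1 h2
    rw [h1, h2, p.2]⟩
  map_id m := by
    ext p : 3
    apply Subtype.ext
    show (Z.map (𝟙 m) p.1.1, Z'.map (𝟙 m) p.1.2) = p.1
    rw [FunctorToTypes.map_id_apply, FunctorToTypes.map_id_apply]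
  map_comp {m₁ m₂ m₃} g h := by
    ext p : 3
    apply Subtype.ext
    show (Z.map (g ≫ h) p.1.1, Z'.map (g ≫ h) p.1.2) = _
    rw [FunctorToTypes.map_comp_apply, FunctorToTypes.map_comp_apply]
    rfl

/-- The first projection `Z ×_X Z' ⟶ Z`. -/
def SSet.levelPullback.fst {Z Z' X : SSet.{u}} (f : Z ⟶ X) (f' : Z' ⟶ X) :
    SSet.levelPullback f f' ⟶ Z where
  app m := TypeCat.ofHom fun p => p.1.1
  naturality m₁ m₂ g := by ext p; rfl

/-- The second projection `Z ×_X Z' ⟶ Z'`. -/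
def SSet.levelPullback.snd {Z Z' X : SSet.{u}} (f : Z ⟶ X) (f' : Z' ⟶ X) :
    SSet.levelPullback f f' ⟶ Z' where
  app m := TypeCat.ofHom fun p => p.1.2
  naturality m₁ m₂ g := by ext p; rfl

/-!
The levelwise pullback is a pullback of simplicial sets, and the three conditions defining an
equivalence of 2-groupoids say that `f` has the right lifting property against the boundary
inclusions `∂Δ[n] ⟶ Δ[n]` for `n ≤ 2`, with unique lifts for `n = 2`; all of this is stable
under base change, which handles the projections.

For the Kan conditions on `Z ×_X Z'`, fill a horn in `Z` and lift the filler along the projection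
`Z ×_X Z' ⟶ Z`, the base change of `f'`. This needs `f'` to lift against horns: in dimension
`n + 1 ≤ 2` because `∂Δ[n + 1]` is obtained from `Λ[n + 1, j]` by attaching `Δ[n]` along
`∂Δ[n]`, and in dimension `≥ 3` because fillers exist in `Z'` and are unique in `X`.
-/

universe u

open Limits

namespace CategoryTheory

variable {C : Type*} [Category C]

def UniqueLifts {A B X Y : C} (i : A ⟶ B) (p : X ⟶ Y) : Prop :=
  ∀ ⦃b₁ b₂ : B ⟶ X⦄, i ≫ b₁ = i ≫ b₂ → b₁ ≫ p = b₂ ≫ p → b₁ = b₂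

lemma IsPullback.uniqueLifts {P Z Z' X A B : C} {s : P ⟶ Z} {p : P ⟶ Z'} {g : Z ⟶ X}
    {t : Z' ⟶ X} (h : IsPullback s p g t) {i : A ⟶ B} (hg : UniqueLifts i g) :
    UniqueLifts i p := by
  intro b₁ b₂ hi hp
  refine h.hom_ext (hg (by simp only [reassoc_of% hi]) ?_) hp
  simp only [Category.assoc, h.w, reassoc_of% hp]

end CategoryTheory

namespace SSet

lemma Subcomplex.inf_range_eq_image_preimage {X Y : SSet.{u}} (B : X.Subcomplex) (g : Y ⟶ X) :
    B ⊓ Subcomplex.range g = (B.preimage g).image g := by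
  ext m x
  simp only [Subfunctor.min_obj, Set.mem_inter_iff, Subfunctor.range_obj, Set.mem_range,
    Subcomplex.image_obj, Subcomplex.preimage_obj, Set.mem_image, Set.mem_preimage]
  aesop

lemma face_singleton_compl_eq_range_δ {n : ℕ} (j : Fin (n + 2)) :
    stdSimplex.face.{u} {j}ᶜ = Subcomplex.range (stdSimplex.δ j) := by
  rw [Subcomplex.range_eq_ofSimplex, stdSimplex.face_singleton_compl]
  rfl

lemma horn_preimage_δ_eq_boundary {n : ℕ} (j : Fin (n + 2)) :
    Λ[n + 1, j].preimage (stdSimplex.δ j) = ∂Δ[n] := by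
  ext ⟨⟨d⟩⟩ y
  have hy : ⇑((stdSimplex.δ j).app _ y) = j.succAbove ∘ y := rfl
  simp only [Subcomplex.preimage_obj, Set.mem_preimage, mem_horn_iff_notMem_range,
    mem_boundary_iff_notMem_range, hy, Set.range_comp]
  constructor
  · rintro ⟨k, hkj, hk⟩
    obtain ⟨k, rfl⟩ := Fin.exists_succAbove_eq hkj
    exact ⟨k, fun h => hk (Set.mem_image_of_mem _ h)⟩
  · rintro ⟨k, hk⟩
    exact ⟨j.succAbove k, Fin.succAbove_ne j k, by simpa [Fin.succAbove_right_inj] using hk⟩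

lemma horn_sup_face_eq_boundary {n : ℕ} (j : Fin (n + 1)) :
    Λ[n, j] ⊔ stdSimplex.face.{u} {j}ᶜ = ∂Δ[n] := by
  apply le_antisymm
  · rw [horn_eq_iSup, boundary_eq_iSup, sup_le_iff, iSup_le_iff]
    exact ⟨fun k => le_iSup (fun i : Fin (n + 1) => stdSimplex.face.{u} {i}ᶜ) k.1,
      le_iSup (fun i : Fin (n + 1) => stdSimplex.face.{u} {i}ᶜ) j⟩
  · rw [boundary_eq_iSup, iSup_le_iff]
    intro k
    by_cases hk : k = j
    · subst hk
      exact le_sup_right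
    · exact (face_le_horn k j hk).trans le_sup_left

lemma horn_inf_face_eq_range {n : ℕ} (j : Fin (n + 2)) :
    Λ[n + 1, j] ⊓ stdSimplex.face {j}ᶜ =
      Subcomplex.range (∂Δ[n].ι ≫ stdSimplex.δ j) := by
  rw [face_singleton_compl_eq_range_δ, Subcomplex.inf_range_eq_image_preimage,
    horn_preimage_δ_eq_boundary, Subcomplex.image_eq_range]

lemma bicartSq_horn_face_boundary {n : ℕ} (j : Fin (n + 2)) :
    Subcomplex.BicartSq (Subcomplex.range (∂Δ[n].ι ≫ stdSimplex.δ j)) Λ[n + 1, j]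
      (stdSimplex.face {j}ᶜ) ∂Δ[n + 1] :=
  ⟨horn_sup_face_eq_boundary j, horn_inf_face_eq_range j⟩

variable {Z X : SSet.{u}}

theorem hasLiftingProperty_horn_ι_of_boundary (f : Z ⟶ X) {n : ℕ} (j : Fin (n + 2))
    [HasLiftingProperty ∂Δ[n].ι f] [HasLiftingProperty ∂Δ[n + 1].ι f] :
    HasLiftingProperty Λ[n + 1, j].ι f := by
  have sq := bicartSq_horn_face_boundary.{u} j
  have e : Arrow.mk ∂Δ[n].ι ≅ Arrow.mk (Subcomplex.homOfLE sq.le₁₃) :=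
    Arrow.isoMk (asIso (Subcomplex.toRange _)) (stdSimplex.faceSingletonComplIso j) (by
      simp [← cancel_mono (stdSimplex.face {j}ᶜ).ι])
  have := HasLiftingProperty.of_arrow_iso_left e f
  have := sq.isPushout.hasLiftingProperty f
  rw [← Subcomplex.homOfLE_ι sq.le₂₄]
  infer_instance

lemma hasLiftingProperty_boundary_ι_iff (f : Z ⟶ X) (n : ℕ) :
    HasLiftingProperty ∂Δ[n].ι f ↔
      ∀ (u : (∂Δ[n] : SSet.{u}) ⟶ Z) (σ : X _⦋n⦌), u ≫ f = bdryRes n σ →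
        ∃ τ : Z _⦋n⦌, bdryRes n τ = u ∧ f.app _ τ = σ := by
  constructor
  · intro _ u σ hu
    have sq : CommSq u ∂Δ[n].ι f (yonedaEquiv.symm σ) := ⟨hu⟩
    refine ⟨yonedaEquiv sq.lift, by simp [bdryRes], ?_⟩
    rw [← yonedaEquiv_comp, sq.fac_right, Equiv.apply_symm_apply]
  · refine fun H => ⟨fun {u v} sq => ?_⟩
    obtain ⟨τ, hτ, hfτ⟩ := H u (yonedaEquiv v) (by simp [bdryRes, sq.w])
    refine ⟨⟨{ l := yonedaEquiv.symm τ, fac_left := hτ, fac_right := ?_ }⟩⟩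
    rw [yonedaEquiv_symm_comp, hfτ, Equiv.symm_apply_apply]

lemma hasLiftingProperty_boundary_zero_ι_iff (f : Z ⟶ X) :
    HasLiftingProperty ∂Δ[0].ι f ↔ Function.Surjective (f.app (op ⦋0⦌)) := by
  have hinit : IsInitial (∂Δ[0] : SSet.{u}) := by
    rw [boundary_zero]
    exact Subcomplex.isInitialBot
  rw [hasLiftingProperty_boundary_ι_iff]
  refine ⟨fun H σ => ?_, fun hf u σ _ => ?_⟩
  · obtain ⟨τ, -, hτ⟩ := H (hinit.to Z) σ (boundary.hom_ext₀)
    exact ⟨τ, hτ⟩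
  · obtain ⟨τ, hτ⟩ := hf σ
    exact ⟨τ, boundary.hom_ext₀, hτ⟩

lemma existsUnique_boundary_lift_iff (f : Z ⟶ X) (n : ℕ) :
    (∀ (u : (∂Δ[n] : SSet.{u}) ⟶ Z) (σ : X _⦋n⦌), u ≫ f = bdryRes n σ →
        ∃! τ : Z _⦋n⦌, bdryRes n τ = u ∧ f.app _ τ = σ) ↔
      HasLiftingProperty ∂Δ[n].ι f ∧ UniqueLifts ∂Δ[n].ι f := by
  rw [hasLiftingProperty_boundary_ι_iff]
  constructor
  · refine fun H => ⟨fun u σ hu => (H u σ hu).exists, fun b₁ b₂ hb hf => ?_⟩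
    have hlift : ∀ b : Δ[n] ⟶ Z, bdryRes n (yonedaEquiv b) = ∂Δ[n].ι ≫ b := by
      simp [bdryRes]
    apply yonedaEquiv.injective
    refine (H (∂Δ[n].ι ≫ b₁) (yonedaEquiv (b₁ ≫ f)) ?_).unique ⟨hlift b₁, rfl⟩
      ⟨(hlift b₂).trans hb.symm, by rw [← yonedaEquiv_comp, hf]⟩
    simp [bdryRes]
  · rintro ⟨H, huniq⟩ u σ hu
    obtain ⟨τ, hτ⟩ := H u σ hu
    refine ⟨τ, hτ, fun τ' hτ' => yonedaEquiv.symm.injective (huniq ?_ ?_)⟩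
    · exact hτ'.1.trans hτ.1.symm
    · rw [yonedaEquiv_symm_comp, yonedaEquiv_symm_comp, hτ'.2, hτ.2]

lemma isEquiv2Gpd_iff (f : Z ⟶ X) :
    IsEquiv2Gpd f ↔ HasLiftingProperty ∂Δ[0].ι f ∧ HasLiftingProperty ∂Δ[1].ι f ∧
      HasLiftingProperty ∂Δ[2].ι f ∧ UniqueLifts ∂Δ[2].ι f := by
  rw [IsEquiv2Gpd, hasLiftingProperty_boundary_zero_ι_iff, hasLiftingProperty_boundary_ι_iff,
    existsUnique_boundary_lift_iff]

lemma hasLiftingProperty_horn_ι_of_kanCond {m : ℕ} {j : Fin (m + 1)} (f : Z ⟶ X)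
    (hZ : Z.KanCond m j) (hX : X.KanCondUnique m j) : HasLiftingProperty Λ[m, j].ι f := by
  refine ⟨fun {u v} sq => ?_⟩
  obtain ⟨σ, hσ⟩ := hZ u
  refine ⟨⟨{ l := σ, fac_left := hσ.symm, fac_right := ?_ }⟩⟩
  exact (hX (u ≫ f)).unique (by rw [hσ, Category.assoc]) sq.w

lemma KanCond.of_hasLiftingProperty {P : SSet.{u}} {m : ℕ} {j : Fin (m + 1)} (p : P ⟶ Z)
    [HasLiftingProperty Λ[m, j].ι p] (hZ : Z.KanCond m j) : P.KanCond m j := by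
  intro σ₀
  obtain ⟨σ, hσ⟩ := hZ (σ₀ ≫ p)
  have sq : CommSq σ₀ Λ[m, j].ι p σ := ⟨hσ⟩
  exact ⟨sq.lift, sq.fac_left.symm⟩

lemma KanCond.kanCondUnique_of_isPullback {P Z' : SSet.{u}} {s : P ⟶ Z} {t : P ⟶ Z'}
    {f : Z ⟶ X} {f' : Z' ⟶ X} (h : IsPullback s t f f') {m : ℕ} {j : Fin (m + 1)}
    (hP : P.KanCond m j) (hZ : Z.KanCondUnique m j) (hZ' : Z'.KanCondUnique m j) :
    P.KanCondUnique m j := by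
  intro σ₀
  obtain ⟨σ, hσ⟩ := hP σ₀
  refine ⟨σ, hσ, fun σ' hσ' => h.hom_ext ?_ ?_⟩
  · exact (hZ (σ₀ ≫ s)).unique (by rw [hσ', Category.assoc]) (by rw [hσ, Category.assoc])
  · exact (hZ' (σ₀ ≫ t)).unique (by rw [hσ', Category.assoc]) (by rw [hσ, Category.assoc])

lemma IsEquiv2Gpd.hasLiftingProperty_horn_ι {f : Z ⟶ X} (hf : IsEquiv2Gpd f)
    (hZ : Z.Is2Groupoid) (hX : X.Is2Groupoid) {m : ℕ} (hm : 1 ≤ m) (j : Fin (m + 1)) :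
    HasLiftingProperty Λ[m, j].ι f := by
  obtain ⟨h₀, h₁, h₂, -⟩ := (isEquiv2Gpd_iff f).mp hf
  match m, hm, j with
  | 1, _, j => exact hasLiftingProperty_horn_ι_of_boundary f j
  | 2, _, j => exact hasLiftingProperty_horn_ι_of_boundary f j
  | m + 3, _, j =>
    exact hasLiftingProperty_horn_ι_of_kanCond f (hZ.1 _ (by omega) j) (hX.2 _ (by omega) j)

lemma IsEquiv2Gpd.of_isPullback {P Z' : SSet.{u}} {s : P ⟶ Z} {p : P ⟶ Z'} {g : Z ⟶ X}
    {t : Z' ⟶ X} (h : IsPullback s p g t) (hg : IsEquiv2Gpd g) : IsEquiv2Gpd p := by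
  obtain ⟨h₀, h₁, h₂, huniq⟩ := (isEquiv2Gpd_iff g).mp hg
  exact (isEquiv2Gpd_iff p).mpr ⟨h.hasLiftingProperty _, h.hasLiftingProperty _,
    h.hasLiftingProperty _, h.uniqueLifts huniq⟩

lemma Is2Groupoid.of_isPullback {P Z' : SSet.{u}} {s : P ⟶ Z} {t : P ⟶ Z'} {f : Z ⟶ X}
    {f' : Z' ⟶ X} (h : IsPullback s t f f') (hZ : Z.Is2Groupoid) (hZ' : Z'.Is2Groupoid)
    (hX : X.Is2Groupoid) (hf' : IsEquiv2Gpd f') : P.Is2Groupoid := by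
  have kan (m : ℕ) (hm : 1 ≤ m) (j : Fin (m + 1)) : P.KanCond m j := by
    have := hf'.hasLiftingProperty_horn_ι hZ' hX hm j
    have := h.flip.hasLiftingProperty Λ[m, j].ι
    exact (hZ.1 m hm j).of_hasLiftingProperty s
  exact ⟨kan, fun m hm j =>
    (kan m (by omega) j).kanCondUnique_of_isPullback h (hZ.2 m hm j) (hZ'.2 m hm j)⟩

namespace levelPullback

variable {Z' : SSet.{u}} (f : Z ⟶ X) (f' : Z' ⟶ X)

def lift {W : SSet.{u}} (a : W ⟶ Z) (b : W ⟶ Z') (h : a ≫ f = b ≫ f') :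
    W ⟶ levelPullback f f' where
  app k := TypeCat.ofHom fun x => ⟨(a.app k x, b.app k x), types_congr_hom (congr_app h k) x⟩
  naturality k₁ k₂ g := by
    ext x
    have ha := types_congr_hom (a.naturality g) x
    have hb := types_congr_hom (b.naturality g) x
    simp only [types_comp_apply] at ha hb
    exact Subtype.ext (Prod.ext ha hb)

lemma isPullback : IsPullback (fst f f') (snd f f') f f' :=
  IsPullback.of_isLimit' ⟨by ext k x; exact x.2⟩ <|
    PullbackCone.IsLimit.mk _ (fun c => lift f f' c.fst c.snd c.condition)
      (fun _ => rfl) (fun _ => by ext; rfl) (fun c l h₁ h₂ => by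
        ext k x
        exact Subtype.ext (Prod.ext (types_congr_hom (congr_app h₁ k) x)
          (types_congr_hom (congr_app h₂ k) x)))

end levelPullback

end SSet

/-- If `Z`, `Z'` and `X` are 2-groupoids and `f : Z ⟶ X`, `f' : Z' ⟶ X` are
equivalences of 2-groupoids, then the levelwise pullback `Z'' = Z ×_X Z'` is again a
2-groupoid and the two projections `Z'' ⟶ Z` and `Z'' ⟶ Z'` are equivalences of
2-groupoids. -/
theorem levelPullback_is2Groupoid_and_proj_equiv {Z Z' X : SSet.{u}}
    (hZ : Z.Is2Groupoid) (hZ' : Z'.Is2Groupoid) (hX : X.Is2Groupoid)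
    (f : Z ⟶ X) (f' : Z' ⟶ X)
    (hf : SSet.IsEquiv2Gpd f) (hf' : SSet.IsEquiv2Gpd f') :
    (SSet.levelPullback f f').Is2Groupoid ∧
    SSet.IsEquiv2Gpd (SSet.levelPullback.fst f f') ∧
    SSet.IsEquiv2Gpd (SSet.levelPullback.snd f f') := by
  have h := SSet.levelPullback.isPullback f f'
  exact ⟨SSet.Is2Groupoid.of_isPullback h hZ hZ' hX hf', hf'.of_isPullback h.flip,
    hf.of_isPullback h⟩
end
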